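/- arXiv:2308.06069 — 2 statements merged into one kernel-verified Lean document; each statement's English description precedes it below -/
import Mathlib

section
/- Let g : ℝ → Prop denote a blackout predicate over continuous time, Δ > 0 the sampling period, and suppose blackouts take at least γ time to recover, i.e. for every t ≥ 0, if g(t) holds then g(s) holds for all s ∈ [t, t+γ). Assume γ > Δ. If for every β ∈ ℕ we have ¬g(βΔ) (the sampled LTL condition G ¬blackout), then for every t ≥ 0 we have ¬g(t) (the continuous MTL condition G ¬blackout). -/
theorem stmt4 (g : ℝ → Prop) (Δ γ : ℝ) (hΔ : 0 < Δ) (hγ : Δ < γ)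
    (hpersist : ∀ t : ℝ, 0 ≤ t → g t → ∀ s : ℝ, t ≤ s → s < t + γ → g s)
    (hLTL : ∀ β : ℕ, ¬ g (β * Δ)) :
    ∀ t : ℝ, 0 ≤ t → ¬ g t := by
  intro t ht hg
  set β : ℕ := ⌈t / Δ⌉₊ with hβ
  apply hLTL β
  apply hpersist t ht hg
  · rw [ge_iff_le.symm, hβ]
    calc t = (t / Δ) * Δ := by field_simp
    _ ≤ (⌈t / Δ⌉₊ : ℝ) * Δ := by
        exact mul_le_mul_of_nonneg_right (Nat.le_ceil _) hΔ.le
  · calc (β : ℝ) * Δ < (t / Δ + 1) * Δ :=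
          mul_lt_mul_of_pos_right (Nat.ceil_lt_add_one (by positivity)) hΔ
      _ = t + Δ := by field_simp
      _ < t + γ := by linarith
end

section
/- Suppose f : ℝ → Bool, Δ > 0, κ ≥ Δ, n = ⌊κ/Δ⌋, and suppose there exist a ≥ 0 and b with b − a > κ such that f(t) = true for all t ∈ [a, b]. Then there exists β ∈ ℕ such that f(βΔ) = true and f((β+j)Δ) = true for all j ∈ {0,…,n−1}, i.e., the sampled LTL formula G(oload → ∨_{j=0}^{n−1} X^j ¬oload) is violated at sample index β. -/
theorem stmt7 (f : ℝ → Bool) (Δ κ : ℝ) (hΔ : 0 < Δ) (hκ : Δ ≤ κ)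
    (n : ℕ) (hn : n = Nat.floor (κ / Δ))
    (a b : ℝ) (ha : 0 ≤ a) (hlen : b - a > κ)
    (hover : ∀ t ∈ Set.Icc a b, f t = true) :
    ∃ β : ℕ, f (β * Δ) = true ∧ ∀ j : ℕ, j < n → f ((β + j : ℕ) * Δ) = true := by
  set β : ℕ := ⌈a / Δ⌉₊ with hβ
  have hnΔ : (n : ℝ) * Δ ≤ κ := by
    rw [hn]
    have h1 : (⌊κ / Δ⌋₊ : ℝ) ≤ κ / Δ := Nat.floor_le (div_nonneg (by linarith) hΔ.le)
    calc (⌊κ / Δ⌋₊ : ℝ) * Δ ≤ (κ / Δ) * Δ := by nlinarith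
      _ = κ := by field_simp
  have hn1 : 1 ≤ n := by
    rw [hn]
    exact (Nat.one_le_floor_iff _).mpr ((one_le_div hΔ).mpr hκ)
  have key : ∀ m : ℕ, m < n → f ((β + m : ℕ) * Δ) = true := by
    intro m hm
    apply hover
    constructor
    · have h1 : a / Δ ≤ (β : ℝ) := Nat.le_ceil _
      have h2 : (β : ℝ) ≤ ((β + m : ℕ) : ℝ) := by exact_mod_cast Nat.le_add_right β m
      calc a = (a / Δ) * Δ := by field_simp
        _ ≤ ((β + m : ℕ) : ℝ) * Δ := by nlinarith
    · have h1 : (β : ℝ) < a / Δ + 1 := Nat.ceil_lt_add_one (by positivity)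
      have h2 : ((β + m : ℕ) : ℝ) = (β : ℝ) + m := by push_cast; ring
      have h3 : (m : ℝ) + 1 ≤ (n : ℝ) := by exact_mod_cast hm
      have : ((β + m : ℕ) : ℝ) * Δ < (a / Δ + 1 + m) * Δ := by
        rw [h2]; nlinarith
      have h4 : (a / Δ + 1 + m) * Δ ≤ a + (n : ℝ) * Δ := by
        have : (a / Δ) * Δ = a := by field_simp
        nlinarith
      linarith
  refine ⟨β, ?_, key⟩
  have := key 0 hn1
  simpa using this
end
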